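/- arXiv:2409.00870 — 2 statements merged into one kernel-verified Lean document; each statement's English description precedes it below -/
import Mathlib

section
/- If K and T are inverse semigroups and T acts on K by endomorphisms such that axiom (AFR) holds via a surjective homomorphism ε: K → E(T), then K is a strong semilattice of the inverse subsemigroups K_e = ε⁻¹(e) (e ∈ E(T)), with structure homomorphisms ε_{e,f}: K_e → K_f for f ≤ e given by ε_{e,f}(a) = f·a. -/
/-- An inverse semigroup: a semigroup in which every element `a` has a unique
inverse `a⁻¹` satisfying `a * a⁻¹ * a = a` and `a⁻¹ * a * a⁻¹ = a⁻¹`. -/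
class InverseSemigroup (S : Type*) extends Semigroup S, Inv S where
  mul_inv_mul : ∀ a : S, a * a⁻¹ * a = a
  inv_mul_inv : ∀ a : S, a⁻¹ * a * a⁻¹ = a⁻¹
  inv_unique : ∀ {a b : S}, a * b * a = a → b * a * b = b → b = a⁻¹

/-- The set of idempotents `E(T)` of a `Mul`-structure. -/
def idemSet (T : Type*) [Mul T] : Set T := {e | e * e = e}

/-- `ran t = t * t⁻¹`. -/
def iran {T : Type*} [Mul T] [Inv T] (t : T) : T := t * t⁻¹

/-- `dom t = t⁻¹ * t`. -/
def idom {T : Type*} [Mul T] [Inv T] (t : T) : T := t⁻¹ * t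

/-- The natural partial order: `a ≤ b` iff `a = e * b` for some idempotent `e`. -/
def nle {T : Type*} [Mul T] (a b : T) : Prop := ∃ e ∈ idemSet T, a = e * b

/-- `b` is an inverse of `a`. -/
def IsInvPair {T : Type*} [Mul T] (a b : T) : Prop := a * b * a = a ∧ b * a * b = b

/-- An action of `T` on `K` by endomorphisms. -/
def IsAction {K T : Type*} [Mul K] [Mul T] (act : T → K → K) : Prop :=
  (∀ t a b, act t (a * b) = act t a * act t b) ∧
  (∀ t u a, act (t * u) a = act t (act u a))

/-- `ε : K → T` is a (surjective) homomorphism from `K` onto the semilattice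
of idempotents `E(T)` of `T`. -/
def IsSurjHomOntoE {K T : Type*} [Mul K] [Mul T] (ε : K → T) : Prop :=
  (∀ a b, ε (a * b) = ε a * ε b) ∧ (∀ a, ε a ∈ idemSet T) ∧
  (∀ e ∈ idemSet T, ∃ a, ε a = e)

/-- Condition (AFR): `e · a = a` iff `ε a ≤ e`, for all `a ∈ K`, `e ∈ E(T)`. -/
def AFR {K T : Type*} [Mul K] [Mul T] (act : T → K → K) (ε : K → T) : Prop :=
  ∀ (a : K), ∀ e ∈ idemSet T, (act e a = a ↔ nle (ε a) e)

/-- The `ε`-class `K_e = ε⁻¹(e)`. -/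
def Kclass {K T : Type*} (ε : K → T) (e : T) : Set K := {a | ε a = e}

section StrongAux

open InverseSemigroup

variable {T : Type*} [InverseSemigroup T]

private lemma inv_invT (a : T) : a⁻¹⁻¹ = a :=
  (inv_unique (inv_mul_inv a) (mul_inv_mul a)).symm

private lemma inv_idemT {e : T} (he : e ∈ idemSet T) : e⁻¹ = e := by
  have he' : e * e = e := he
  have h : e * e * e = e := by rw [he', he']
  exact (inv_unique h h).symm

private lemma idem_mul_idem {e f : T} (he : e ∈ idemSet T) (hf : f ∈ idemSet T) :
    e * f ∈ idemSet T := by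
  have he' : ∀ x : T, e * (e * x) = e * x := fun x => by
    rw [← mul_assoc]; exact congrArg (· * x) he
  have hf' : ∀ x : T, f * (f * x) = f * x := fun x => by
    rw [← mul_assoc]; exact congrArg (· * x) hf
  set b := (e * f)⁻¹ with hb
  have hib : ∀ x : T, b * (e * (f * (b * x))) = b * x := fun x => by
    have h := congrArg (· * x) (inv_mul_inv (e * f))
    simp only [mul_assoc] at h
    exact h
  have h1 : (e * f) * (f * b * e) * (e * f) = e * f := by
    have h := mul_inv_mul (e * f)
    simp only [mul_assoc] at h ⊢
    rw [hf', he']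
    exact h
  have h2 : (f * b * e) * (e * f) * (f * b * e) = f * b * e := by
    simp only [mul_assoc]
    rw [he', hf', hib]
  have hbe : f * b * e = b := by
    have := inv_unique h1 h2
    rw [← hb] at this
    exact this
  have hbb : b * b = b := by
    have h2' : (f * b * e) * (f * b * e) = f * b * e := by
      simp only [mul_assoc]
      rw [hib]
    rw [← hbe]
    exact h2'
  have h3 : e * f = b := by
    rw [← inv_invT (e * f), ← hb]
    exact inv_idemT hbb
  show (e * f) * (e * f) = e * f
  rw [h3]
  exact hbb

private lemma idem_comm {e f : T} (he : e ∈ idemSet T) (hf : f ∈ idemSet T) :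
    e * f = f * e := by
  have he' : ∀ x : T, e * (e * x) = e * x := fun x => by
    rw [← mul_assoc]; exact congrArg (· * x) he
  have hf' : ∀ x : T, f * (f * x) = f * x := fun x => by
    rw [← mul_assoc]; exact congrArg (· * x) hf
  have hef : e * f ∈ idemSet T := idem_mul_idem he hf
  have hfe : f * e ∈ idemSet T := idem_mul_idem hf he
  have hef' : (e * f) * (e * f) = e * f := hef
  have hfe' : (f * e) * (f * e) = f * e := hfe
  have h1 : (e * f) * (f * e) * (e * f) = e * f := by
    simp only [mul_assoc] at hef' ⊢
    rw [hf', he']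
    exact hef'
  have h2 : (f * e) * (e * f) * (f * e) = f * e := by
    simp only [mul_assoc] at hfe' ⊢
    rw [he', hf']
    exact hfe'
  have := inv_unique h1 h2
  rw [this]
  exact (inv_idemT hef).symm

private lemma eps_inv {K : Type*} [InverseSemigroup K] {ε : K → T}
    (hε : IsSurjHomOntoE ε) (a : K) : ε a⁻¹ = ε a := by
  obtain ⟨hhom, hid, _⟩ := hε
  have h1 : ε a * ε a⁻¹ * ε a = ε a := by
    rw [← hhom, ← hhom, mul_inv_mul]
  have h2 : ε a⁻¹ * ε a * ε a⁻¹ = ε a⁻¹ := by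
    rw [← hhom, ← hhom, inv_mul_inv]
  rw [inv_unique h1 h2]
  exact inv_idemT (hid a)

end StrongAux

/-- If `T` acts on `K` by endomorphisms such that (AFR) holds via
`ε : K → E(T)`, then `K` is a strong semilattice of its inverse subsemigroups
`K_e = ε⁻¹(e)` (`e ∈ E(T)`), with structure homomorphisms
`ε_{e,f} : K_e → K_f` (`f ≤ e`) given by `ε_{e,f}(a) = f · a`. -/
theorem strong_semilattice_of_AFR {K T : Type*} [InverseSemigroup K]
    [InverseSemigroup T] (act : T → K → K) (hact : IsAction act)
    (ε : K → T) (hε : IsSurjHomOntoE ε) (hafr : AFR act ε) :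
    -- each `K_e` is an inverse subsemigroup
    (∀ e ∈ idemSet T, ∀ a ∈ Kclass ε e, ∀ b ∈ Kclass ε e,
        a * b ∈ Kclass ε e) ∧
    (∀ e ∈ idemSet T, ∀ a ∈ Kclass ε e, a⁻¹ ∈ Kclass ε e) ∧
    -- the structure maps `ε_{e,f} = act f` map `K_e` into `K_f` for `f ≤ e`
    (∀ e ∈ idemSet T, ∀ f ∈ idemSet T, nle f e →
        ∀ a ∈ Kclass ε e, act f a ∈ Kclass ε f) ∧
    -- the structure maps are homomorphisms
    (∀ e ∈ idemSet T, ∀ f ∈ idemSet T, nle f e →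
        ∀ a ∈ Kclass ε e, ∀ b ∈ Kclass ε e,
          act f (a * b) = act f a * act f b) ∧
    -- `ε_{e,e}` is the identity of `K_e`
    (∀ e ∈ idemSet T, ∀ a ∈ Kclass ε e, act e a = a) ∧
    -- `ε_{f,g} ∘ ε_{e,f} = ε_{e,g}` whenever `g ≤ f ≤ e`
    (∀ e ∈ idemSet T, ∀ f ∈ idemSet T, ∀ g ∈ idemSet T, nle f e → nle g f →
        ∀ a ∈ Kclass ε e, act g (act f a) = act g a) ∧
    -- multiplication is computed via the structure maps
    (∀ e ∈ idemSet T, ∀ f ∈ idemSet T, ∀ a ∈ Kclass ε e, ∀ b ∈ Kclass ε f,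
        a * b = act (e * f) a * act (e * f) b) := by

  obtain ⟨hdist, hcomp⟩ := hact
  obtain ⟨hhom, hid, hsurj⟩ := hε
  -- a key lemma: if f ≤ e and a ∈ K_e then ε (act f a) = f
  have key : ∀ e ∈ idemSet T, ∀ f ∈ idemSet T, nle f e →
      ∀ a ∈ Kclass ε e, ε (act f a) = f := by
    intro e he f hf hfe a ha
    have ha' : ε a = e := ha
    obtain ⟨g, hg, hgf⟩ := hfe
    have hfe' : f * e = f := by
      rw [hgf, mul_assoc, he, ← hgf]
    have hef : e * f = f := by rw [idem_comm he hf, hfe']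
    obtain ⟨c, hc⟩ := hsurj f hf
    have hactc : act f c = c :=
      (hafr c f hf).2 ⟨f, hf, by rw [hc, hf]⟩
    have hεac : ε (a * c) = f := by rw [hhom, ha', hc, hef]
    have hkey : act f (a * c) = a * c :=
      (hafr (a * c) f hf).2 ⟨f, hf, by rw [hεac, hf]⟩
    have heq : a * c = act f a * c := by
      rw [← hkey, hdist, hactc]
    have hle : nle (ε (act f a)) f := by
      refine (hafr (act f a) f hf).1 ?_
      rw [← hcomp]
      have : f * f = f := hf
      rw [this]
    obtain ⟨i, hi, hif⟩ := hle
    have h1 : ε (act f a) * f = ε (act f a) := by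
      rw [hif, mul_assoc, hf]
    have h2 : f = ε (act f a) * f := by
      have := congrArg ε heq
      rw [hhom, hhom, ha', hc, hef] at this
      exact this
    rw [← h1, ← h2]
  refine ⟨?_, ?_, ?_, ?_, ?_, ?_, ?_⟩
  · intro e he a ha b hb
    show ε (a * b) = e
    have ha' : ε a = e := ha
    have hb' : ε b = e := hb
    rw [hhom, ha', hb', he]
  · intro e he a ha
    show ε a⁻¹ = e
    rw [eps_inv ⟨hhom, hid, hsurj⟩ a]
    exact ha
  · exact key
  · intro e he f hf hfe a ha b hb
    exact hdist f a b
  · intro e he a ha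
    have ha' : ε a = e := ha
    exact (hafr a e he).2 ⟨e, he, by rw [ha', he]⟩
  · intro e he f hf g hg hfe hgf a ha
    obtain ⟨h, hh, hhgf⟩ := hgf
    have hgff : g * f = g := by rw [hhgf, mul_assoc, hf, ← hhgf]
    rw [← hcomp, hgff]
  · intro e he f hf a ha b hb
    have ha' : ε a = e := ha
    have hb' : ε b = f := hb
    have hef : e * f ∈ idemSet T := idem_mul_idem he hf
    have hεab : ε (a * b) = e * f := by rw [hhom, ha', hb']
    have : act (e * f) (a * b) = a * b :=
      (hafr (a * b) (e * f) hef).2 ⟨e * f, hef, by rw [hεab]; exact hef.symm⟩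
    rw [← hdist, this]
end

section
/- Let K and T be inverse semigroups, T acting on K by endomorphisms satisfying (AFR) via ε: K → E(T), 𝕊 = K⋊T the full restricted semidirect product, Θ the congruence induced by the second projection, and ω_[t] the bitranslation of 𝕊 given by ω_[t](x,u) = (t·x, tu), (x,u)ω_[t] = (ran(ut)·x, ut). Let 𝕂 = {(c,e) : e ∈ E(T), c ∈ K, ε(c) = e} be the Kernel of Θ, with the induced action t·(c,e) = (t·c, ran(te)). Then for every t ∈ T, e ∈ E(T), and (c,e) ∈ 𝕂, the element t·(c,e) of 𝕊 equals ω_[t] (c,e) ω_[t]⁻¹, i.e., the result of applying the left translation of ω_[t] and the right translation of ω_[t]⁻¹ = ω_[t⁻¹] to (c,e). -/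
/-- The carrier of the λ-semidirect product `K ⋊^λ T`:
`{(a,t) ∈ K × T : a = ran(t) · a}`. -/
def lsdSet {K T : Type*} [Mul K] [Mul T] [Inv T] (act : T → K → K) :
    Set (K × T) := {p | act (iran p.2) p.1 = p.1}

/-- The multiplication of the λ-semidirect product:
`(a,t)(b,u) = ((ran(tu) · a)(t · b), tu)`. -/
def lsdMul {K T : Type*} [Mul K] [Mul T] [Inv T] (act : T → K → K)
    (p q : K × T) : K × T :=
  (act (iran (p.2 * q.2)) p.1 * act p.2 q.1, p.2 * q.2)

/-- The carrier of the full restricted semidirect product `K ⋊ T`: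
`{(a,t) ∈ K × T : ε a = ran t}`. -/
def rsdSet {K T : Type*} [Mul T] [Inv T] (ε : K → T) : Set (K × T) :=
  {p | ε p.1 = iran p.2}

/-- The multiplication of the full restricted semidirect product:
`(a,t)(b,u) = (a (t · b), tu)`. -/
def rsdMul {K T : Type*} [Mul K] [Mul T] (act : T → K → K)
    (p q : K × T) : K × T :=
  (p.1 * act p.2 q.1, p.2 * q.2)

/-- The Kernel of the congruence `ker π₂` (equality of second components) on a
subset `C` of a product, with multiplication `m`: all elements of `C` that are
`(ker π₂)`-related to an idempotent of `C`. -/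
def pi2Kernel {X Y : Type*} (m : X × Y → X × Y → X × Y) (C : Set (X × Y)) :
    Set (X × Y) :=
  {p | p ∈ C ∧ ∃ q ∈ C, m q q = q ∧ q.2 = p.2}

/-- `(l, r)` is a bitranslation of the subsemigroup on the carrier `C` (with
multiplication `m`): `l` is a left translation, `r` is a right translation
(both mapping `C` into `C`), and they are linked. -/
def IsBitransOn {X : Type*} (m : X → X → X) (C : Set X) (l r : X → X) : Prop :=
  (∀ s ∈ C, l s ∈ C ∧ r s ∈ C) ∧
  (∀ s ∈ C, ∀ t ∈ C,
      l (m s t) = m (l s) t ∧ r (m s t) = m s (r t) ∧ m s (l t) = m (r s) t)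

/-- The pair `(l, r)` respects the congruence `Θ = ker π₂` (equality of second
components) on `C`. -/
def RespectsPi2 {K T : Type*} (C : Set (K × T)) (l r : K × T → K × T) : Prop :=
  ∀ p ∈ C, ∀ q ∈ C, p.2 = q.2 → (l p).2 = (l q).2 ∧ (r p).2 = (r q).2

/-- The bitranslation induced by `(l, r)` on the quotient `𝕊/Θ ≅ T` is the
inner bitranslation of `T` induced by `t`. -/
def InducesInnerPi2 {K T : Type*} [Mul T] (C : Set (K × T))
    (l r : K × T → K × T) (t : T) : Prop :=
  ∀ p ∈ C, (l p).2 = t * p.2 ∧ (r p).2 = p.2 * t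

/-- Membership in `Ω(𝕊, Θ)`: a bitranslation of `𝕊` respecting `Θ` whose
induced bitranslation on `𝕊/Θ ≅ T` is inner. -/
def MemOmegaPi2 {K T : Type*} [Mul T] (m : K × T → K × T → K × T)
    (C : Set (K × T)) (l r : K × T → K × T) : Prop :=
  IsBitransOn m C l r ∧ RespectsPi2 C l r ∧ ∃ t : T, InducesInnerPi2 C l r t

/-- The left translation part of the bioperator `ω_[t]` on `𝕊 = K ⋊ T`:
`ω_[t](x,u) = (t·x, tu)`. -/
def Ltr {K T : Type*} [Mul T] (act : T → K → K) (t : T) :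
    K × T → K × T :=
  fun p => (act t p.1, t * p.2)

/-- The right translation part of the bioperator `ω_[t]` on `𝕊 = K ⋊ T`:
`(x,u)ω_[t] = (ran(ut)·x, ut)`. -/
def Rtr {K T : Type*} [Mul T] [Inv T] (act : T → K → K) (t : T) :
    K × T → K × T :=
  fun p => (act (iran (p.2 * t)) p.1, p.2 * t)

section Aux
variable {S : Type*} [InverseSemigroup S]

private lemma mim (a : S) : a * a⁻¹ * a = a := InverseSemigroup.mul_inv_mul a
private lemma imi (a : S) : a⁻¹ * a * a⁻¹ = a⁻¹ := InverseSemigroup.inv_mul_inv a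

private lemma inv_invS (a : S) : a⁻¹⁻¹ = a :=
  (InverseSemigroup.inv_unique (imi a) (mim a)).symm

private lemma idem_invS {e : S} (he : e * e = e) : e⁻¹ = e :=
  (InverseSemigroup.inv_unique (a := e) (b := e) (by rw [he, he]) (by rw [he, he])).symm

private lemma idem_mul_idemS {e f : S} (he : e*e = e) (hf : f*f = f) :
    (e*f)*(e*f) = e*f := by
  set x := (e*f)⁻¹ with hx
  have h1 : (e*f) * x * (e*f) = e*f := mim _
  have h2 : x * (e*f) * x = x := imi _
  have he2 : ∀ y : S, e*(e*y) = e*y := fun y => by rw [← mul_assoc, he]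
  have hf2 : ∀ y : S, f*(f*y) = f*y := fun y => by rw [← mul_assoc, hf]
  have h2' : ∀ y : S, x*(e*(f*(x*y))) = x*y := fun y => by
    have := congrArg (· * y) h2
    simpa only [mul_assoc] using this
  simp only [mul_assoc] at h1
  have key : f*(x*e) = x := by
    have ha : (e*f) * (f*(x*e)) * (e*f) = e*f := by
      calc (e*f) * (f*(x*e)) * (e*f)
          = e*(f*(f*(x*(e*(e*f))))) := by simp only [mul_assoc]
        _ = e*(f*(x*(e*f))) := by rw [hf2, he2]
        _ = e*f := h1
    have hb : (f*(x*e)) * (e*f) * (f*(x*e)) = f*(x*e) := by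
      calc (f*(x*e)) * (e*f) * (f*(x*e))
          = f*(x*(e*(e*(f*(f*(x*e)))))) := by simp only [mul_assoc]
        _ = f*(x*(e*(f*(x*e)))) := by rw [he2, hf2]
        _ = f*(x*e) := by rw [h2' e]
    exact InverseSemigroup.inv_unique ha hb
  have hxx : x * x = x := by
    conv_lhs => rw [← key]
    calc (f*(x*e)) * (f*(x*e)) = f*(x*(e*(f*(x*e)))) := by simp only [mul_assoc]
      _ = f*(x*e) := by rw [h2' e]
      _ = x := key
  have hefx : e*f = x := by
    calc e*f = ((e*f)⁻¹)⁻¹ := (inv_invS _).symm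
      _ = x⁻¹ := by rw [← hx]
      _ = x := idem_invS hxx
  rw [hefx]; exact hxx

private lemma idem_commS {e f : S} (he : e*e=e) (hf : f*f=f) : e*f = f*e := by
  have hef := idem_mul_idemS he hf
  have hfe := idem_mul_idemS hf he
  have he2 : ∀ y : S, e*(e*y) = e*y := fun y => by rw [← mul_assoc, he]
  have hf2 : ∀ y : S, f*(f*y) = f*y := fun y => by rw [← mul_assoc, hf]
  have h1 : (e*f)*(f*e)*(e*f) = e*f := by
    calc (e*f)*(f*e)*(e*f) = e*(f*(f*(e*(e*f)))) := by simp only [mul_assoc]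
      _ = e*(f*(e*f)) := by rw [hf2, he2]
      _ = e*f := by rw [← mul_assoc]; exact hef
  have h2 : (f*e)*(e*f)*(f*e) = f*e := by
    calc (f*e)*(e*f)*(f*e) = f*(e*(e*(f*(f*e)))) := by simp only [mul_assoc]
      _ = f*(e*(f*e)) := by rw [he2, hf2]
      _ = f*e := by rw [← mul_assoc]; exact hfe
  have : f*e = (e*f)⁻¹ := InverseSemigroup.inv_unique h1 h2
  rw [this, idem_invS hef]

private lemma mul_inv_revS (a b : S) : (a*b)⁻¹ = b⁻¹ * a⁻¹ := by
  have hd : (a⁻¹*a)*(a⁻¹*a) = a⁻¹*a := by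
    calc (a⁻¹*a)*(a⁻¹*a) = (a⁻¹*a*a⁻¹)*a := by simp only [mul_assoc]
      _ = a⁻¹*a := by rw [imi]
  have hr : (b*b⁻¹)*(b*b⁻¹) = b*b⁻¹ := by
    calc (b*b⁻¹)*(b*b⁻¹) = (b*b⁻¹*b)*b⁻¹ := by simp only [mul_assoc]
      _ = b*b⁻¹ := by rw [mim]
  have hcomm := idem_commS hr hd
  have hcomm2 := idem_commS hd hr
  have h1 : (a*b)*(b⁻¹*a⁻¹)*(a*b) = a*b := by
    calc (a*b)*(b⁻¹*a⁻¹)*(a*b)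
        = a*((b*b⁻¹)*(a⁻¹*a))*b := by simp only [mul_assoc]
      _ = a*((a⁻¹*a)*(b*b⁻¹))*b := by rw [hcomm]
      _ = (a*a⁻¹*a)*(b*b⁻¹*b) := by simp only [mul_assoc]
      _ = a*b := by rw [mim, mim]
  have h2 : (b⁻¹*a⁻¹)*(a*b)*(b⁻¹*a⁻¹) = b⁻¹*a⁻¹ := by
    calc (b⁻¹*a⁻¹)*(a*b)*(b⁻¹*a⁻¹)
        = b⁻¹*((a⁻¹*a)*(b*b⁻¹))*a⁻¹ := by simp only [mul_assoc]
      _ = b⁻¹*((b*b⁻¹)*(a⁻¹*a))*a⁻¹ := by rw [hcomm2]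
      _ = (b⁻¹*b*b⁻¹)*(a⁻¹*a*a⁻¹) := by simp only [mul_assoc]
      _ = b⁻¹*a⁻¹ := by rw [imi, imi]
  exact (InverseSemigroup.inv_unique h1 h2).symm

private lemma iran_idemS (a : S) : iran a * iran a = iran a := by
  show (a*a⁻¹)*(a*a⁻¹) = a*a⁻¹
  calc (a*a⁻¹)*(a*a⁻¹) = (a*a⁻¹*a)*a⁻¹ := by simp only [mul_assoc]
    _ = a*a⁻¹ := by rw [mim]

end Aux

/-- Let `T` act on `K` by endomorphisms satisfying (AFR) via
`ε : K → E(T)`, let `𝕊 = K ⋊ T` with `Θ = ker π₂` and `ω_[t]` as before, and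
let `𝕂 = {(c,e) : e ∈ E(T), ε c = e}` be the Kernel of `Θ` with the induced
action `t · (c,e) = (t·c, ran(te))`.  Then `ω_[t]⁻¹ = ω_[t⁻¹]`, and for every
`t ∈ T`, `e ∈ E(T)` and `(c,e) ∈ 𝕂`, the element `t · (c,e)` of `𝕊` equals
`ω_[t] (c,e) ω_[t]⁻¹`, the result of applying the left translation of `ω_[t]`
and the right translation of `ω_[t⁻¹]` to `(c,e)`. -/
theorem act_on_kernel_by_conjugation {K T : Type*} [InverseSemigroup K]
    [InverseSemigroup T] (act : T → K → K) (hact : IsAction act)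
    (ε : K → T) (hε : IsSurjHomOntoE ε) (hafr : AFR act ε)
    (t : T) (e : T) (he : e ∈ idemSet T) (c : K) (hc : ε c = e) :
    -- `ω_[t⁻¹]` is the inverse `ω_[t]⁻¹` of `ω_[t]` in `Ω(𝕊, Θ)`
    (∀ p ∈ rsdSet ε,
        Ltr act t (Ltr act t⁻¹ (Ltr act t p)) = Ltr act t p ∧
        Rtr act t (Rtr act t⁻¹ (Rtr act t p)) = Rtr act t p ∧
        Ltr act t⁻¹ (Ltr act t (Ltr act t⁻¹ p)) = Ltr act t⁻¹ p ∧
        Rtr act t⁻¹ (Rtr act t (Rtr act t⁻¹ p)) = Rtr act t⁻¹ p) ∧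
    -- `(c,e) ∈ 𝕂 ⊆ 𝕊`
    ((c, e) ∈ rsdSet ε) ∧
    -- `t · (c,e) = ω_[t] (c,e) ω_[t]⁻¹`
    (Ltr act t (Rtr act t⁻¹ (c, e)) = (act t c, iran (t * e)) ∧
     Rtr act t⁻¹ (Ltr act t (c, e)) = (act t c, iran (t * e))) := by
  obtain ⟨hhom, hcomp⟩ := hact
  have hd : (t⁻¹*t)*(t⁻¹*t) = t⁻¹*t := by
    calc (t⁻¹*t)*(t⁻¹*t) = (t⁻¹*t*t⁻¹)*t := by simp only [mul_assoc]
      _ = t⁻¹*t := by rw [imi]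
  have Lt3 : ∀ (s : T) (p : K × T),
      Ltr act s (Ltr act s⁻¹ (Ltr act s p)) = Ltr act s p := by
    intro s p
    show (act s (act s⁻¹ (act s p.1)), s*(s⁻¹*(s*p.2))) = (act s p.1, s*p.2)
    have h1st : act s (act s⁻¹ (act s p.1)) = act s p.1 := by
      simp only [← hcomp]
      rw [← mul_assoc, mim]
    have h2nd : s*(s⁻¹*(s*p.2)) = s*p.2 := by
      rw [← mul_assoc, ← mul_assoc, mim]
    rw [h1st, h2nd]
  have Rt3 : ∀ (s : T) (p : K × T),
      Rtr act s (Rtr act s⁻¹ (Rtr act s p)) = Rtr act s p := by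
    intro s p
    obtain ⟨a, u⟩ := p
    show (act (iran (u*s*s⁻¹*s)) (act (iran (u*s*s⁻¹)) (act (iran (u*s)) a)),
        u*s*s⁻¹*s) = (act (iran (u*s)) a, u*s)
    have h0 : u*s*s⁻¹*s = u*s := by
      calc u*s*s⁻¹*s = u*(s*s⁻¹*s) := by simp only [mul_assoc]
        _ = u*s := by rw [mim]
    have h1 : iran (u*s*s⁻¹) = iran (u*s) := by
      show (u*s*s⁻¹)*(u*s*s⁻¹)⁻¹ = (u*s)*(u*s)⁻¹
      rw [mul_inv_revS (u*s) s⁻¹, inv_invS s]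
      calc (u*s*s⁻¹)*(s*(u*s)⁻¹) = (u*(s*s⁻¹*s))*(u*s)⁻¹ := by
            simp only [mul_assoc]
        _ = (u*s)*(u*s)⁻¹ := by rw [mim]
    have hrr : iran (u*s) * iran (u*s) = iran (u*s) := iran_idemS _
    have h2 : act (iran (u*s)) (act (iran (u*s)) (act (iran (u*s)) a))
        = act (iran (u*s)) a := by
      simp only [← hcomp, hrr]
    rw [h0, h1, h2]
  have hre : e⁻¹ = e := idem_invS he
  have hact_e : act e c = c := (hafr c e he).mpr ⟨e, he, by rw [hc, he]⟩
  have hcm : e*(t⁻¹*t) = (t⁻¹*t)*e := idem_commS he hd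
  have hF1 : t * (e * (t⁻¹ * (t * e))) = t * e := by
    calc t*(e*(t⁻¹*(t*e))) = t*((e*(t⁻¹*t))*e) := by simp only [mul_assoc]
      _ = t*(((t⁻¹*t)*e)*e) := by rw [hcm]
      _ = (t*(t⁻¹*t))*(e*e) := by simp only [mul_assoc]
      _ = t*e := by rw [← mul_assoc t t⁻¹ t, mim, he]
  have hsnd : iran (t*e) = t*(e*t⁻¹) := by
    show (t*e)*(t*e)⁻¹ = t*(e*t⁻¹)
    rw [mul_inv_revS t e, hre]
    calc (t*e)*(e*t⁻¹) = t*((e*e)*t⁻¹) := by simp only [mul_assoc]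
      _ = t*(e*t⁻¹) := by rw [he]
  have hfst1 : act t (act (iran (e*t⁻¹)) c) = act t c := by
    have hir : iran (e*t⁻¹) = (e*t⁻¹)*(t*e) := by
      show (e*t⁻¹)*(e*t⁻¹)⁻¹ = (e*t⁻¹)*(t*e)
      rw [mul_inv_revS e t⁻¹, inv_invS, hre]
    rw [hir, ← hcomp]
    have hkey : t*((e*t⁻¹)*(t*e)) = t*e := by
      calc t*((e*t⁻¹)*(t*e)) = t*(e*(t⁻¹*(t*e))) := by simp only [mul_assoc]
        _ = t*e := hF1
    rw [hkey, hcomp, hact_e]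
  have hir2 : iran ((t*e)*t⁻¹) * t = t*e := by
    show ((t*e)*t⁻¹)*((t*e)*t⁻¹)⁻¹*t = t*e
    rw [mul_inv_revS (t*e) t⁻¹, inv_invS t, mul_inv_revS t e, hre]
    calc ((t*e)*t⁻¹)*(t*(e*t⁻¹))*t
        = t*((e*(t⁻¹*t))*(e*(t⁻¹*t))) := by simp only [mul_assoc]
      _ = t*(e*(t⁻¹*t)) := by rw [idem_mul_idemS he hd]
      _ = t*((t⁻¹*t)*e) := by rw [hcm]
      _ = (t*t⁻¹*t)*e := by simp only [mul_assoc]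
      _ = t*e := by rw [mim]
  have hfst2 : act (iran ((t*e)*t⁻¹)) (act t c) = act t c := by
    rw [← hcomp, hir2, hcomp, hact_e]
  refine ⟨fun p _ => ⟨Lt3 t p, Rt3 t p, ?_, ?_⟩, ?_, ?_, ?_⟩
  · have h := Lt3 t⁻¹ p; rwa [inv_invS] at h
  · have h := Rt3 t⁻¹ p; rwa [inv_invS] at h
  · show ε c = iran e
    rw [hc]
    show e = e * e⁻¹
    rw [idem_invS he, he]
  · show (act t (act (iran (e*t⁻¹)) c), t*(e*t⁻¹)) = (act t c, iran (t*e))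
    rw [hfst1, hsnd]
  · show (act (iran ((t*e)*t⁻¹)) (act t c), (t*e)*t⁻¹) = (act t c, iran (t*e))
    rw [hfst2, hsnd, mul_assoc]
end
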